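/- arXiv:1908.08479 — 2 statements merged into one kernel-verified Lean document; each statement's English description precedes it below -/
import Mathlib

section
/- Let A : R^N -> R^m satisfy (1-δ)||v||^2 <= ||Av||^2 <= (1+δ)||v||^2 for all v in a set containing X^{j+1} - X, and suppose the quantities satisfy ||X^{j+1}-X||^2 <= 2⟨(I - A*A)(X^j - X), X^{j+1} - X⟩ + 2⟨z, A(X^{j+1}-X)⟩ + c^2, where additionally |⟨(I - A*A)u, w⟩| <= δ||u|| ||w|| for u = X^j - X, w = X^{j+1} - X. Then ||X^{j+1} - X|| <= 2δ||X^j - X|| + 2√(1+δ)||z|| + c. -/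
open scoped RealInnerProductSpace

theorem le_add_of_sq_le_mul_add_sq {e p c : ℝ} (hp : 0 ≤ p) (hc : 0 ≤ c)
    (h : e ^ 2 ≤ p * e + c ^ 2) : e ≤ p + c := by
  by_contra! hlt
  nlinarith [mul_le_mul_of_nonneg_left hlt.le hc]

theorem le_sqrt_mul_of_sq_le_mul_sq {x y K : ℝ} (hy : 0 ≤ y) (h : x ^ 2 ≤ K * y ^ 2) :
    x ≤ √K * y :=
  calc x ≤ √(x ^ 2) := Real.le_sqrt_of_sq_le le_rfl
    _ ≤ √(K * y ^ 2) := Real.sqrt_le_sqrt h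
    _ = √K * y := by rw [Real.sqrt_mul' _ (by positivity), Real.sqrt_sq hy]

theorem stmt13 {N m : ℕ} (δ c : ℝ) (hδ : 0 ≤ δ) (hc : 0 ≤ c)
    (A : EuclideanSpace ℝ (Fin N) →L[ℝ] EuclideanSpace ℝ (Fin m))
    (X Xj Xj1 : EuclideanSpace ℝ (Fin N)) (z : EuclideanSpace ℝ (Fin m))
    (hRIP : (1 - δ) * ‖Xj1 - X‖ ^ 2 ≤ ‖A (Xj1 - X)‖ ^ 2 ∧
      ‖A (Xj1 - X)‖ ^ 2 ≤ (1 + δ) * ‖Xj1 - X‖ ^ 2)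
    (hmain : ‖Xj1 - X‖ ^ 2 ≤
      2 * ⟪(Xj - X) - ContinuousLinearMap.adjoint A (A (Xj - X)), Xj1 - X⟫
        + 2 * ⟪z, A (Xj1 - X)⟫ + c ^ 2)
    (hcross : |⟪(Xj - X) - ContinuousLinearMap.adjoint A (A (Xj - X)), Xj1 - X⟫|
      ≤ δ * ‖Xj - X‖ * ‖Xj1 - X‖) :
    ‖Xj1 - X‖ ≤ 2 * δ * ‖Xj - X‖ + 2 * Real.sqrt (1 + δ) * ‖z‖ + c := by
  have hAw : ‖A (Xj1 - X)‖ ≤ √(1 + δ) * ‖Xj1 - X‖ :=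
    le_sqrt_mul_of_sq_le_mul_sq (norm_nonneg _) hRIP.2
  have hz : ⟪z, A (Xj1 - X)⟫ ≤ ‖z‖ * (√(1 + δ) * ‖Xj1 - X‖) :=
    (real_inner_le_norm _ _).trans (mul_le_mul_of_nonneg_left hAw (norm_nonneg _))
  refine le_add_of_sq_le_mul_add_sq (by positivity) hc ?_
  calc ‖Xj1 - X‖ ^ 2
      ≤ 2 * (δ * ‖Xj - X‖ * ‖Xj1 - X‖) + 2 * (‖z‖ * (√(1 + δ) * ‖Xj1 - X‖)) + c ^ 2 := by
        linarith [(le_abs_self _).trans hcross]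
    _ = (2 * δ * ‖Xj - X‖ + 2 * √(1 + δ) * ‖z‖) * ‖Xj1 - X‖ + c ^ 2 := by ring
end

section
/- Let X in S_{r,R} (unit Frobenius norm, CP-rank r with factors bounded by R), let A satisfy the TRIP: ||(A*A - I)Y||_F <= δ||Y||_F for all tensors Y of CP-rank at most 3r with appropriately bounded factors, with δ <= (1/2)2^{-n^α}, and let z satisfy ||z||_2 <= 2^{-0.5 n^α}/(2||A||). Suppose the iterates X^j have CP-rank at most r and satisfy ||X^j - X||_F <= ||X^0 - X||_F = ||X||_F = 1 and W^j = X^j + A*(AX + z - A X^j). Then ||W^j - X||_F^2 <= 2^{-n^α}. -/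
/-- The `d`-order outer product `x₁ ⊗ ⋯ ⊗ x_d`, as a tensor with the
Frobenius (Euclidean) norm. -/
noncomputable def outerD {d : ℕ} {n : Fin d → ℕ}
    (x : (i : Fin d) → EuclideanSpace ℝ (Fin (n i))) :
    EuclideanSpace ℝ ((i : Fin d) → Fin (n i)) :=
  (WithLp.equiv 2 _).symm (fun a => ∏ i, x i (a i))

/-- `T` is a sum of `r` rank-one tensors whose factors all have norm at most `R`. -/
def CPBounded {d : ℕ} {n : Fin d → ℕ} (r : ℕ) (R : ℝ)
    (T : EuclideanSpace ℝ ((i : Fin d) → Fin (n i))) : Prop :=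
  ∃ x : Fin r → (i : Fin d) → EuclideanSpace ℝ (Fin (n i)),
    (∀ k i, ‖x k i‖ ≤ R) ∧ T = ∑ k, outerD (x k)

/-!
With `W = Xj + A†(A X + z - A Xj)` one has `W - X = -(A†A - 1)(Xj - X) + A† z`.
The difference `Xj - X` is a sum of `3 r` rank-one tensors with factors bounded by `max R R'`
(`r` from `Xj`, `r` from `-X` with one factor negated, and `r` zero terms), so the TRIP bounds
the first part by `δ ‖Xj - X‖ ≤ b² / 2`, where `b = 2^(-n^α / 2) ≤ 1`; the noise part is at most
`‖A‖ ‖z‖ ≤ b / 2`. Hence `‖W - X‖ ≤ (b² + b) / 2 ≤ b`.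
-/

section Landweber

variable {E F : Type*} [NormedAddCommGroup E] [InnerProductSpace ℝ E] [CompleteSpace E]
  [NormedAddCommGroup F] [InnerProductSpace ℝ F] [CompleteSpace F]

theorem landweber_step_sub (A : E →L[ℝ] F) (X Y : E) (z : F) :
    (Y + A.adjoint (A X + z - A Y)) - X = -(A.adjoint (A (Y - X)) - (Y - X)) + A.adjoint z := by
  simp only [map_sub, map_add]
  abel

theorem norm_landweber_step_sub_le (A : E →L[ℝ] F) (X Y : E) (z : F) :
    ‖(Y + A.adjoint (A X + z - A Y)) - X‖ ≤
      ‖A.adjoint (A (Y - X)) - (Y - X)‖ + ‖A‖ * ‖z‖ := by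
  rw [landweber_step_sub]
  calc _ ≤ ‖-(A.adjoint (A (Y - X)) - (Y - X))‖ + ‖A.adjoint z‖ := norm_add_le _ _
    _ ≤ _ := by
      rw [norm_neg]
      gcongr
      exact (A.adjoint.le_opNorm z).trans_eq (by rw [LinearIsometryEquiv.norm_map])

end Landweber

section OuterProduct

variable {d : ℕ} {n : Fin d → ℕ}

theorem outerD_update_neg (i₀ : Fin d) (x : (i : Fin d) → EuclideanSpace ℝ (Fin (n i))) :
    outerD (Function.update x i₀ (-(x i₀))) = -outerD x := by
  ext a
  simp only [outerD, WithLp.equiv_symm_apply, PiLp.neg_apply,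
    ← Finset.mul_prod_erase Finset.univ _ (Finset.mem_univ i₀)]
  rw [Finset.prod_congr rfl fun j hj => by rw [Function.update_of_ne (Finset.ne_of_mem_erase hj)]]
  simp

theorem outerD_eq_zero_of_eq_zero {x : (i : Fin d) → EuclideanSpace ℝ (Fin (n i))} {i₀ : Fin d}
    (hx : x i₀ = 0) : outerD x = 0 := by
  ext a
  simp [outerD, Finset.prod_eq_zero (Finset.mem_univ i₀), hx]

namespace CPBounded

variable {r r' r₁ r₂ : ℕ} {R R' : ℝ} {T T₁ T₂ : EuclideanSpace ℝ ((i : Fin d) → Fin (n i))}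

theorem mono_radius (h : R ≤ R') (hT : CPBounded r R T) : CPBounded r R' T := by
  obtain ⟨x, hx, rfl⟩ := hT
  exact ⟨x, fun k i => (hx k i).trans h, rfl⟩

theorem add (h₁ : CPBounded r₁ R T₁) (h₂ : CPBounded r₂ R T₂) :
    CPBounded (r₁ + r₂) R (T₁ + T₂) := by
  obtain ⟨x, hx, rfl⟩ := h₁
  obtain ⟨y, hy, rfl⟩ := h₂
  refine ⟨Fin.addCases x y, ?_, by simp [Fin.sum_univ_add]⟩
  intro k i
  induction k using Fin.addCases with
  | left k => simpa using hx k i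
  | right k => simpa using hy k i

theorem neg (hd : d ≠ 0) (hT : CPBounded r R T) : CPBounded r R (-T) := by
  obtain ⟨x, hx, rfl⟩ := hT
  let i₀ : Fin d := ⟨0, Nat.pos_of_ne_zero hd⟩
  refine ⟨fun k => Function.update (x k) i₀ (-(x k i₀)), fun k i => ?_, ?_⟩
  · rcases eq_or_ne i i₀ with rfl | h
    · simpa using hx k i₀
    · simpa [Function.update_of_ne h] using hx k i
  · simp only [outerD_update_neg, Finset.sum_neg_distrib]

theorem sub (hd : d ≠ 0) (h₁ : CPBounded r₁ R T₁) (h₂ : CPBounded r₂ R T₂) :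
    CPBounded (r₁ + r₂) R (T₁ - T₂) := by
  simpa only [sub_eq_add_neg] using h₁.add (h₂.neg hd)

theorem zero (hd : d ≠ 0) (hR : 0 ≤ R) : CPBounded (n := n) r R 0 := by
  refine ⟨fun _ _ => 0, fun _ _ => by simpa using hR, ?_⟩
  simp [outerD_eq_zero_of_eq_zero (x := fun _ => 0) (i₀ := ⟨0, Nat.pos_of_ne_zero hd⟩) rfl]

theorem mono_rank (hd : d ≠ 0) (hR : 0 ≤ R) (h : r ≤ r') (hT : CPBounded r R T) :
    CPBounded r' R T := by
  obtain ⟨s, rfl⟩ := Nat.exists_eq_add_of_le h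
  simpa using hT.add (zero (r := s) hd hR)

theorem radius_nonneg (hd : d ≠ 0) (hT : CPBounded r R T) (hT0 : T ≠ 0) : 0 ≤ R := by
  obtain ⟨x, hx, rfl⟩ := hT
  obtain ⟨k, -⟩ : ∃ k, outerD (x k) ≠ 0 := by
    by_contra! h
    exact hT0 (Finset.sum_eq_zero fun k _ => h k)
  exact (norm_nonneg _).trans (hx k ⟨0, Nat.pos_of_ne_zero hd⟩)

/-- For `d = 0` every outer product is the empty product `1`, so `T` is determined by `r`. -/
theorem eq_of_order_zero {n : Fin 0 → ℕ} {T T' : EuclideanSpace ℝ ((i : Fin 0) → Fin (n i))}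
    (hT : CPBounded r R T) (hT' : CPBounded r R' T') : T = T' := by
  obtain ⟨x, -, rfl⟩ := hT
  obtain ⟨y, -, rfl⟩ := hT'
  exact Finset.sum_congr rfl fun k _ => congrArg outerD (Subsingleton.elim _ _)

end CPBounded

end OuterProduct

theorem sq_add_div_two_le_sq {b : ℝ} (hb0 : 0 ≤ b) (hb1 : b ≤ 1) :
    ((b ^ 2 + b) / 2) ^ 2 ≤ b ^ 2 := by
  nlinarith [mul_le_mul_of_nonneg_left hb1 hb0]

theorem stmt14 {d r m : ℕ} {n : Fin d → ℕ} (nn : ℕ) (α δ R R' : ℝ)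
    (X Xj : EuclideanSpace ℝ ((i : Fin d) → Fin (n i)))
    (A : EuclideanSpace ℝ ((i : Fin d) → Fin (n i)) →L[ℝ] EuclideanSpace ℝ (Fin m))
    (z : EuclideanSpace ℝ (Fin m))
    (hXnorm : ‖X‖ = 1) (hX : CPBounded r R X)
    (hXj : CPBounded r R' Xj)
    (hTRIP : ∀ Y : EuclideanSpace ℝ ((i : Fin d) → Fin (n i)),
      CPBounded (3 * r) (max R R') Y →
        ‖ContinuousLinearMap.adjoint A (A Y) - Y‖ ≤ δ * ‖Y‖)
    (hδ : δ ≤ (1 / 2) * (2 : ℝ) ^ (-((nn : ℝ) ^ α)))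
    (hz : ‖z‖ ≤ (2 : ℝ) ^ (-(0.5 : ℝ) * (nn : ℝ) ^ α) / (2 * ‖A‖))
    (hiter : ‖Xj - X‖ ≤ 1) :
    ‖(Xj + ContinuousLinearMap.adjoint A (A X + z - A Xj)) - X‖ ^ 2
      ≤ (2 : ℝ) ^ (-((nn : ℝ) ^ α)) := by
  set b : ℝ := (2 : ℝ) ^ (-(0.5 : ℝ) * (nn : ℝ) ^ α)
  have ht : 0 ≤ (nn : ℝ) ^ α := by positivity
  have hb0 : 0 ≤ b := by positivity
  have hb1 : b ≤ 1 := Real.rpow_le_one_of_one_le_of_nonpos one_le_two (by linarith)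
  have hbb : (2 : ℝ) ^ (-((nn : ℝ) ^ α)) = b ^ 2 := by
    rw [← Real.rpow_natCast, ← Real.rpow_mul zero_le_two]
    congr 1
    push_cast
    ring
  rw [hbb] at hδ ⊢
  have hnoise : ‖A‖ * ‖z‖ ≤ b / 2 := by
    rcases (norm_nonneg A).eq_or_lt with hA | hA
    · rw [← hA, zero_mul]; positivity
    · calc ‖A‖ * ‖z‖ ≤ ‖A‖ * (b / (2 * ‖A‖)) := by gcongr
        _ = b / 2 := by field_simp
  have hlin : ‖A.adjoint (A (Xj - X)) - (Xj - X)‖ ≤ b ^ 2 / 2 := by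
    rcases eq_or_ne Xj X with rfl | hne
    · simp only [sub_self, map_zero, norm_zero]; positivity
    have hd : d ≠ 0 := by
      rintro rfl
      exact hne (hXj.eq_of_order_zero hX)
    have hR : 0 ≤ max R R' :=
      le_max_of_le_left (hX.radius_nonneg hd (norm_ne_zero_iff.mp (by simp [hXnorm])))
    have hcp : CPBounded (3 * r) (max R R') (Xj - X) :=
      ((hXj.mono_radius (le_max_right R R')).sub hd
        (hX.mono_radius (le_max_left R R'))).mono_rank hd hR (by omega)
    refine (hTRIP _ hcp).trans ?_
    rcases le_total 0 δ with hδ0 | hδ0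
    · nlinarith [mul_le_mul_of_nonneg_left hiter hδ0]
    · nlinarith [mul_nonpos_of_nonpos_of_nonneg hδ0 (norm_nonneg (Xj - X))]
  calc _ ≤ (b ^ 2 / 2 + b / 2) ^ 2 := by
        gcongr
        exact (norm_landweber_step_sub_le A X Xj z).trans (add_le_add hlin hnoise)
    _ ≤ b ^ 2 := by simpa only [add_div] using sq_add_div_two_le_sq hb0 hb1
end
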